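/- arXiv:1910.11754 — 3 statements merged into one kernel-verified Lean document; each statement's English description precedes it below -/
import Mathlib

section
/- The infinite sum ∑_{i=0}^∞ i·((1-p^{i+1})^r - (1-p^i)^r) equals ∑_{k=1}^{r} (-1)^{k-1} · C(r,k) · p^k/(1-p^k), for any 0 < p < 1 and positive integer r. -/
lemma aux_tsum (x : ℝ) (hx0 : 0 < x) (hx1 : x < 1) :
    ∑' i : ℕ, (i : ℝ) * (x ^ (i + 1) - x ^ i) = -(x / (1 - x)) := by
  have hn : ‖x‖ < 1 := by rw [Real.norm_eq_abs, abs_of_pos hx0]; exact hx1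
  have h1 : ∀ i : ℕ, (i : ℝ) * (x ^ (i + 1) - x ^ i) = ((i : ℝ) * x ^ i) * (x - 1) := by
    intro i; ring
  rw [tsum_congr h1, tsum_mul_right, tsum_coe_mul_geometric_of_norm_lt_one hn]
  have h2 : (1 : ℝ) - x ≠ 0 := by linarith
  field_simp
  ring

lemma aux_summable (x : ℝ) (hx0 : 0 < x) (hx1 : x < 1) :
    Summable (fun i : ℕ => (i : ℝ) * (x ^ (i + 1) - x ^ i)) := by
  have hn : ‖x‖ < 1 := by rw [Real.norm_eq_abs, abs_of_pos hx0]; exact hx1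
  have h := (summable_pow_mul_geometric_of_norm_lt_one 1 hn (R := ℝ)).mul_right (x - 1)
  refine h.congr fun i => ?_
  simp only [pow_one]
  ring

/-- ∑_{i=0}^∞ i·((1-p^{i+1})^r - (1-p^i)^r) = ∑_{k=1}^{r} (-1)^{k-1}·C(r,k)·p^k/(1-p^k),
for 0 < p < 1 and r ≥ 1. -/
theorem stmt2 (p : ℝ) (hp0 : 0 < p) (hp1 : p < 1) (r : ℕ) (hr : 1 ≤ r) :
    ∑' i : ℕ, (i : ℝ) * ((1 - p ^ (i + 1)) ^ r - (1 - p ^ i) ^ r) =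
      ∑ k ∈ Finset.Icc 1 r, (-1 : ℝ) ^ (k - 1) * (r.choose k) * (p ^ k / (1 - p ^ k)) := by
  have hx0 : ∀ k : ℕ, 1 ≤ k → 0 < p ^ k := fun k _ => pow_pos hp0 k
  have hx1 : ∀ k : ℕ, 1 ≤ k → p ^ k < 1 := fun k hk =>
    pow_lt_one₀ hp0.le hp1 (by omega)
  have key : ∀ i : ℕ, (i : ℝ) * ((1 - p ^ (i + 1)) ^ r - (1 - p ^ i) ^ r) =
      ∑ k ∈ Finset.Icc 1 r, (-1 : ℝ) ^ k * (r.choose k) *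
        ((i : ℝ) * ((p ^ k) ^ (i + 1) - (p ^ k) ^ i)) := by
    intro i
    have expand : ∀ y : ℝ, (1 - y) ^ r =
        ∑ k ∈ Finset.range (r + 1), (-1 : ℝ) ^ k * (r.choose k) * y ^ k := by
      intro y
      rw [show (1 : ℝ) - y = -y + 1 by ring, add_pow]
      refine Finset.sum_congr rfl fun k _ => ?_
      rw [neg_pow]
      ring
    rw [expand, expand, ← Finset.sum_sub_distrib, Finset.mul_sum]
    have hsub : Finset.Icc 1 r ⊆ Finset.range (r + 1) := by
      intro k hk; simp only [Finset.mem_Icc] at hk; simp only [Finset.mem_range]; omega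
    rw [← Finset.sum_subset hsub]
    · refine Finset.sum_congr rfl fun k hk => ?_
      rw [← pow_mul, ← pow_mul, mul_comm (i + 1) k, mul_comm i k, pow_mul, pow_mul]
      ring
    · intro k hk hk'
      have : k = 0 := by
        simp only [Finset.mem_range] at hk
        simp only [Finset.mem_Icc] at hk'
        omega
      subst this
      simp
  rw [tsum_congr key]
  rw [Summable.tsum_finsetSum (fun k hk => ?_)]
  · refine Finset.sum_congr rfl fun k hk => ?_
    simp only [Finset.mem_Icc] at hk
    rw [tsum_mul_left, aux_tsum _ (hx0 k hk.1) (hx1 k hk.1)]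
    have : (-1 : ℝ) ^ k = -(-1 : ℝ) ^ (k - 1) := by
      rw [show k = (k - 1) + 1 by omega, pow_succ]
      simp
    rw [this]
    ring
  · simp only [Finset.mem_Icc] at hk
    exact ((aux_summable _ (hx0 k hk.1) (hx1 k hk.1)).mul_left _)
end

section
/- The top-2 aggregation operation f((v1,v2),(v3,v4)) = (m1, m2), where m1 is the maximum of {v1,v3} and m2 is the maximum of {v1,v2,v3,v4} \ {m1} (with multiplicity, defined on pairs from a linear order extended with a bottom element ⊥ less than all elements, where each pair (a,b) satisfies b ≤ a), is associative. -/
/-!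
In a distributive lattice, distributing the meet over the joins shows that either bracketing of
three pairs `(a, b), (c, d), (e, g)` has first coordinate `a ⊔ c ⊔ e` and second coordinate
`(a ⊓ c) ⊔ (a ⊓ e) ⊔ (c ⊓ e) ⊔ (b ⊔ d ⊔ g)`, an expression symmetric in the three pairs.
-/

section DistribLattice

variable {α : Type*} [DistribLattice α]

def top2Merge (x y : α × α) : α × α := (x.1 ⊔ y.1, (x.1 ⊓ y.1) ⊔ (x.2 ⊔ y.2))

theorem top2Merge_top2Merge_snd (x y z : α × α) :
    (top2Merge (top2Merge x y) z).2 =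
      (x.1 ⊓ y.1) ⊔ (x.1 ⊓ z.1) ⊔ (y.1 ⊓ z.1) ⊔ (x.2 ⊔ y.2 ⊔ z.2) := by
  simp only [top2Merge, inf_sup_right]
  ac_rfl

theorem top2Merge_assoc (x y z : α × α) :
    top2Merge (top2Merge x y) z = top2Merge x (top2Merge y z) := by
  refine Prod.ext (sup_assoc ..) ?_
  rw [top2Merge_top2Merge_snd]
  simp only [top2Merge, inf_sup_left]
  ac_rfl

end DistribLattice

theorem stmt7_general {V : Type*} [LinearOrder V]
    (f : (WithBot V × WithBot V) → (WithBot V × WithBot V) → (WithBot V × WithBot V))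
    (hf : ∀ x y, f x y = (max x.1 y.1, max (min x.1 y.1) (max x.2 y.2)))
    (x y z : WithBot V × WithBot V) :
    f (f x y) z = f x (f y z) := by
  have hf_eq : f = top2Merge := funext₂ hf
  rw [hf_eq, top2Merge_assoc]

/-- The top-2 aggregation f((v1,v2),(v3,v4)) = (max v1 v3, max (min v1 v3) (max v2 v4)),
defined on pairs over a linear order with bottom element ⊥ where each pair (a,b)
satisfies b ≤ a, is associative. -/
theorem stmt7 {V : Type*} [LinearOrder V]
    (f : (WithBot V × WithBot V) → (WithBot V × WithBot V) → (WithBot V × WithBot V))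
    (hf : ∀ x y, f x y = (max x.1 y.1, max (min x.1 y.1) (max x.2 y.2)))
    (x y z : WithBot V × WithBot V)
    (hx : x.2 ≤ x.1) (hy : y.2 ≤ y.1) (hz : z.2 ≤ z.1) :
    f (f x y) z = f x (f y z) :=
  stmt7_general f hf x y z
end

section
/- A Merkle proof of length d (the depth of the tree) together with the leaf value determines the root hash uniquely: the verification function folding H_node over the sibling hashes, starting from H_leaf of the leaf value and using the direction bits of the leaf index, computes the root hash of the tree. -/
/-- Root hash of a complete binary Merkle tree of depth d with leaves `v`. -/
def merkleRoot {V D : Type*} (Hleaf : V → D) (Hnode : D → D → D) :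
    (d : ℕ) → (Fin (2 ^ d) → V) → D
  | 0, v => Hleaf (v ⟨0, by norm_num⟩)
  | d + 1, v =>
      Hnode
        (merkleRoot Hleaf Hnode d
          (fun i => v ⟨i.val, by have h := i.isLt; rw [pow_succ]; omega⟩))
        (merkleRoot Hleaf Hnode d
          (fun i => v ⟨2 ^ d + i.val, by have h := i.isLt; rw [pow_succ]; omega⟩))

/-- The Merkle proof for leaf index k: the list of hashes of the siblings of the nodes on
the path from the leaf to the root, ordered bottom-to-top. -/
def merkleProof {V D : Type*} (Hleaf : V → D) (Hnode : D → D → D) :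
    (d : ℕ) → (Fin (2 ^ d) → V) → Fin (2 ^ d) → List D
  | 0, _, _ => []
  | d + 1, v, k =>
      if hk : k.val < 2 ^ d then
        merkleProof Hleaf Hnode d
          (fun i => v ⟨i.val, by have h := i.isLt; rw [pow_succ]; omega⟩) ⟨k.val, hk⟩
          ++ [merkleRoot Hleaf Hnode d
                (fun i => v ⟨2 ^ d + i.val, by have h := i.isLt; rw [pow_succ]; omega⟩)]
      else
        merkleProof Hleaf Hnode d
          (fun i => v ⟨2 ^ d + i.val, by have h := i.isLt; rw [pow_succ]; omega⟩)
          ⟨k.val - 2 ^ d, by have h := k.isLt; have h2 : 2 ^ (d + 1) = 2 ^ d * 2 := pow_succ 2 d; omega⟩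
          ++ [merkleRoot Hleaf Hnode d
                (fun i => v ⟨i.val, by have h := i.isLt; rw [pow_succ]; omega⟩)]

/-- Merkle proof verification: fold the sibling hashes over the current hash, ordering each
node-hash application by the corresponding direction bit of the leaf index. -/
def merkleVerify {D : Type*} (Hnode : D → D → D) : ℕ → D → List D → D
  | _, h, [] => h
  | k, h, s :: rest =>
      merkleVerify Hnode (k / 2) (if k % 2 = 1 then Hnode s h else Hnode h s) rest

lemma merkleVerify_append {D : Type*} (Hnode : D → D → D) :
    ∀ (l1 : List D) (k : ℕ) (h : D) (l2 : List D),
      merkleVerify Hnode k h (l1 ++ l2) =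
        merkleVerify Hnode (k / 2 ^ l1.length) (merkleVerify Hnode k h l1) l2
  | [], k, h, l2 => by simp [merkleVerify]
  | s :: rest, k, h, l2 => by
    show merkleVerify Hnode (k / 2) _ (rest ++ l2) = _
    rw [merkleVerify_append Hnode rest, Nat.div_div_eq_div_mul]
    norm_num [pow_succ']
    rfl

lemma merkleVerify_highbit {D : Type*} (Hnode : D → D → D) :
    ∀ (l : List D) (d k m : ℕ) (h : D), l.length ≤ d →
      merkleVerify Hnode (k + 2 ^ d * m) h l = merkleVerify Hnode k h l
  | [], _, _, _, _, _ => rfl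
  | s :: rest, d, k, m, h, hd => by
    obtain ⟨d', rfl⟩ : ∃ d', d = d' + 1 := by
      have := (List.length_cons : (s :: rest).length = _) ▸ hd; exact ⟨d - 1, by omega⟩
    have h2 : (2 : ℕ) ^ (d' + 1) * m = 2 * (2 ^ d' * m) := by ring
    have hmod : (k + 2 ^ (d' + 1) * m) % 2 = k % 2 := by
      rw [h2]; omega
    have hdiv : (k + 2 ^ (d' + 1) * m) / 2 = k / 2 + 2 ^ d' * m := by
      rw [h2]; omega
    simp only [merkleVerify, hmod, hdiv]
    exact merkleVerify_highbit Hnode rest d' (k / 2) m _ (by simpa using Nat.le_of_succ_le_succ hd)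

lemma merkleProof_length {V D : Type*} (Hleaf : V → D) (Hnode : D → D → D) :
    ∀ (d : ℕ) (v : Fin (2 ^ d) → V) (k : Fin (2 ^ d)),
      (merkleProof Hleaf Hnode d v k).length = d
  | 0, _, _ => rfl
  | d + 1, v, k => by
    rw [merkleProof]
    split <;> simp [merkleProof_length Hleaf Hnode d]

/-- Verification of the correct Merkle proof, starting from the leaf hash and using the
direction bits of the leaf index, computes the root hash of the tree. -/
theorem stmt17 {V D : Type*} (Hleaf : V → D) (Hnode : D → D → D)
    (d : ℕ) (v : Fin (2 ^ d) → V) (k : Fin (2 ^ d)) :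
    merkleVerify Hnode k.val (Hleaf (v k)) (merkleProof Hleaf Hnode d v k) =
      merkleRoot Hleaf Hnode d v := by
  induction d with
  | zero =>
    have : k = ⟨0, by norm_num⟩ := by ext; omega
    subst this
    rfl
  | succ d ih =>
    have h2 : (2 : ℕ) ^ (d + 1) = 2 ^ d * 2 := pow_succ 2 d
    rw [merkleProof, merkleRoot]
    split
    · next hk =>
      rw [merkleVerify_append, merkleProof_length]
      have h1 : merkleVerify Hnode k.val (Hleaf (v k))
          (merkleProof Hleaf Hnode d
            (fun i : Fin (2 ^ d) => v ⟨i.val, by have h := i.isLt; rw [pow_succ]; omega⟩)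
            ⟨k.val, hk⟩) =
          merkleRoot Hleaf Hnode d
            (fun i : Fin (2 ^ d) => v ⟨i.val, by have h := i.isLt; rw [pow_succ]; omega⟩) :=
        ih (fun i : Fin (2 ^ d) => v ⟨i.val, by have h := i.isLt; rw [pow_succ]; omega⟩)
          ⟨k.val, hk⟩
      rw [h1]
      have h0 : k.val / 2 ^ d = 0 := Nat.div_eq_of_lt hk
      simp [merkleVerify, h0]
    · next hk =>
      push_neg at hk
      rw [merkleVerify_append, merkleProof_length]
      have hklt := k.isLt
      have hk2 : k.val - 2 ^ d < 2 ^ d := by omega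
      have h1 : merkleVerify Hnode (k.val - 2 ^ d) (Hleaf (v k))
          (merkleProof Hleaf Hnode d
            (fun i : Fin (2 ^ d) => v ⟨2 ^ d + i.val, by have h := i.isLt; rw [pow_succ]; omega⟩)
            ⟨k.val - 2 ^ d, hk2⟩) =
          merkleRoot Hleaf Hnode d
            (fun i : Fin (2 ^ d) => v ⟨2 ^ d + i.val, by have h := i.isLt; rw [pow_succ]; omega⟩) := by
        have hv : v k = (fun i : Fin (2 ^ d) =>
            v ⟨2 ^ d + i.val, by have h := i.isLt; rw [pow_succ]; omega⟩) ⟨k.val - 2 ^ d, hk2⟩ := by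
          simp only
          congr 1
          ext
          simp
          omega
        rw [hv]
        exact ih (fun i : Fin (2 ^ d) =>
          v ⟨2 ^ d + i.val, by have h := i.isLt; rw [pow_succ]; omega⟩) ⟨k.val - 2 ^ d, hk2⟩
      have hkval : k.val = (k.val - 2 ^ d) + 2 ^ d * 1 := by omega
      have h3 : ∀ (l : List D), l.length = d → ∀ h : D,
          merkleVerify Hnode k.val h l = merkleVerify Hnode (k.val - 2 ^ d) h l := by
        intro l hl h
        conv_lhs => rw [hkval]
        exact merkleVerify_highbit Hnode l d _ 1 h (le_of_eq hl)
      rw [h3 _ (merkleProof_length Hleaf Hnode d _ _) _, h1]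
      have hdiv : k.val / 2 ^ d = 1 :=
        Nat.div_eq_of_lt_le (by omega) (by omega)
      simp [merkleVerify, hdiv]
end
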